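/- arXiv:1703.03346 — 6 statements merged into one kernel-verified Lean document; each statement's English description precedes it below -/
import Mathlib

section
/- Generalized weighted bisimilarity ∼, defined as the union of all generalized weighted bisimulation relations on a WTS, is a transitive relation: if s ∼ t and t ∼ u then s ∼ u. -/
open Classical

/-- A weighted transition system with states `S` and atomic propositions `AP`. -/
structure WTS (S AP : Type) where
  tr : S → NNReal → S → Prop
  label : S → Set AP

/-- The image set θ(s)(T) = {r | ∃ t ∈ T, s —r→ t}. -/
def theta {S AP : Type} (M : WTS S AP) (s : S) (T : Set S) : Set NNReal :=
  {r | ∃ t ∈ T, M.tr s r t}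

/-- θ⁻(s)(T): the infimum of the image set, or −∞ if it is empty. -/
noncomputable def thetaMin {S AP : Type} (M : WTS S AP) (s : S) (T : Set S) : EReal :=
  if theta M s T = ∅ then ⊥
  else sInf ((fun r : NNReal => ((r : ℝ) : EReal)) '' theta M s T)

/-- θ⁺(s)(T): the supremum of the image set, or ∞ if it is empty. -/
noncomputable def thetaMax {S AP : Type} (M : WTS S AP) (s : S) (T : Set S) : EReal :=
  if theta M s T = ∅ then ⊤
  else sSup ((fun r : NNReal => ((r : ℝ) : EReal)) '' theta M s T)

/-- A generalized weighted bisimulation relation. -/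
def IsGWBisim {S AP : Type} (M : WTS S AP) (R : S → S → Prop) : Prop :=
  Equivalence R ∧
    ∀ s t : S, R s t →
      M.label s = M.label t ∧
      ∀ T : Set S, (∃ u : S, T = {v | R u v}) →
        thetaMin M s T = thetaMin M t T ∧ thetaMax M s T = thetaMax M t T

/-- Generalized weighted bisimilarity ∼. -/
def gwBisimilar {S AP : Type} (M : WTS S AP) (s t : S) : Prop :=
  ∃ R : S → S → Prop, IsGWBisim M R ∧ R s t

/-- A (classical) weighted bisimulation relation. -/
def IsWBisim {S AP : Type} (M : WTS S AP) (R : S → S → Prop) : Prop :=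
  Equivalence R ∧
    ∀ s t : S, R s t →
      M.label s = M.label t ∧
      (∀ (r : NNReal) (s' : S), M.tr s r s' → ∃ t' : S, M.tr t r t' ∧ R s' t') ∧
      (∀ (r : NNReal) (t' : S), M.tr t r t' → ∃ s' : S, M.tr s r s' ∧ R s' t')

/-- Weighted bisimilarity ∼_W. -/
def wBisimilar {S AP : Type} (M : WTS S AP) (s t : S) : Prop :=
  ∃ R : S → S → Prop, IsWBisim M R ∧ R s t

section AuxGW

variable {S AP : Type} (M : WTS S AP)

private lemma sInf_iUnion' {ι : Sort*} (t : ι → Set EReal) :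
    sInf (⋃ i, t i) = ⨅ i, sInf (t i) :=
  sSup_iUnion (β := ERealᵒᵈ) t

private lemma theta_empty_iff (s : S) (T : Set S) :
    theta M s T = ∅ ↔ thetaMin M s T = ⊥ := by
  constructor
  · intro h; simp [thetaMin, h]
  · intro h
    by_contra hne
    rw [thetaMin, if_neg hne] at h
    have h0 : (0 : EReal) ≤ sInf ((fun r : NNReal => ((r : ℝ) : EReal)) '' theta M s T) := by
      apply le_sInf
      rintro x ⟨r, -, rfl⟩
      simp only []
      exact_mod_cast r.2
    rw [h] at h0
    simp at h0

/-- Key lemma: for an `R`-saturated set `T`, `thetaMin`/`thetaMax` agree on `R`-related states. -/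
private lemma gw_saturated (R : S → S → Prop) (h : IsGWBisim M R)
    (T : Set S) (hT : ∀ a ∈ T, ∀ b, R a b → b ∈ T)
    (s t : S) (hst : R s t) :
    thetaMin M s T = thetaMin M t T ∧ thetaMax M s T = thetaMax M t T := by
  obtain ⟨hEq, hcond⟩ := h
  set e : NNReal → EReal := fun r : NNReal => ((r : ℝ) : EReal) with he
  -- decomposition of theta over classes
  have hdec : ∀ x : S, theta M x T = ⋃ a : T, theta M x {v | R a.1 v} := by
    intro x
    ext r
    constructor
    · rintro ⟨b, hb, htr⟩
      exact Set.mem_iUnion.mpr ⟨⟨b, hb⟩, ⟨b, hEq.refl b, htr⟩⟩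
    · intro hr
      obtain ⟨⟨a, ha⟩, ⟨b, hab, htr⟩⟩ := Set.mem_iUnion.mp hr
      exact ⟨b, hT a ha b hab, htr⟩
  -- the per-class min/max equalities
  have hmm : ∀ a : S,
      thetaMin M s {v | R a v} = thetaMin M t {v | R a v} ∧
      thetaMax M s {v | R a v} = thetaMax M t {v | R a v} :=
    fun a => (hcond s t hst).2 {v | R a v} ⟨a, rfl⟩
  -- per-class emptiness transfer
  have hce : ∀ a : S, theta M s {v | R a v} = ∅ ↔ theta M t {v | R a v} = ∅ := by
    intro a
    rw [theta_empty_iff, theta_empty_iff, (hmm a).1]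
  -- per-class equality of sInf/sSup of images (with no empty special-casing)
  have hclass : ∀ a : S,
      sInf (e '' theta M s {v | R a v}) = sInf (e '' theta M t {v | R a v}) ∧
      sSup (e '' theta M s {v | R a v}) = sSup (e '' theta M t {v | R a v}) := by
    intro a
    by_cases hes : theta M s {v | R a v} = ∅
    · have het := (hce a).mp hes
      rw [hes, het]
      exact ⟨rfl, rfl⟩
    · have het : theta M t {v | R a v} ≠ ∅ := fun h' => hes ((hce a).mpr h')
      have h1 := (hmm a).1
      have h2 := (hmm a).2
      rw [thetaMin, thetaMin, if_neg hes, if_neg het] at h1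
      rw [thetaMax, thetaMax, if_neg hes, if_neg het] at h2
      exact ⟨h1, h2⟩
  have himg : ∀ x : S, e '' theta M x T = ⋃ a : T, e '' theta M x {v | R a.1 v} := by
    intro x
    rw [hdec x, Set.image_iUnion]
  have hInf : sInf (e '' theta M s T) = sInf (e '' theta M t T) := by
    rw [himg s, himg t, sInf_iUnion', sInf_iUnion']
    exact iInf_congr fun a => (hclass a.1).1
  have hSup : sSup (e '' theta M s T) = sSup (e '' theta M t T) := by
    rw [himg s, himg t, sSup_iUnion, sSup_iUnion]
    exact iSup_congr fun a => (hclass a.1).2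
  -- emptiness transfer for T itself
  have hempty : theta M s T = ∅ ↔ theta M t T = ∅ := by
    rw [hdec s, hdec t]
    simp only [Set.iUnion_eq_empty]
    exact ⟨fun h a => (hce a.1).mp (h a), fun h a => (hce a.1).mpr (h a)⟩
  by_cases hes : theta M s T = ∅
  · have het := hempty.mp hes
    rw [thetaMin, thetaMin, thetaMax, thetaMax, if_pos hes, if_pos het, if_pos hes, if_pos het]
    exact ⟨rfl, rfl⟩
  · have het : theta M t T ≠ ∅ := fun h' => hes (hempty.mpr h')
    rw [thetaMin, thetaMin, thetaMax, thetaMax, if_neg hes, if_neg het, if_neg hes, if_neg het]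
    exact ⟨hInf, hSup⟩

end AuxGW
theorem gwBisimilar_trans {S AP : Type} (M : WTS S AP) (s t u : S)
    (hst : gwBisimilar M s t) (htu : gwBisimilar M t u) : gwBisimilar M s u := by
  obtain ⟨R1, h1, hst1⟩ := hst
  obtain ⟨R2, h2, htu2⟩ := htu
  set R : S → S → Prop := Relation.EqvGen (fun a b => R1 a b ∨ R2 a b) with hR
  have hEq : Equivalence R := Relation.EqvGen.is_equivalence _
  refine ⟨R, ⟨hEq, ?_⟩,
    hEq.trans (Relation.EqvGen.rel _ _ (Or.inl hst1)) (Relation.EqvGen.rel _ _ (Or.inr htu2))⟩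
  intro a b hab
  induction hab with
  | rel a b hab =>
    constructor
    · cases hab with
      | inl h => exact (h1.2 a b h).1
      | inr h => exact (h2.2 a b h).1
    · rintro T ⟨w, rfl⟩
      have hT1 : ∀ x ∈ {v | R w v}, ∀ y, R1 x y → y ∈ {v | R w v} := fun x hx y hxy =>
        hEq.trans hx (Relation.EqvGen.rel _ _ (Or.inl hxy))
      have hT2 : ∀ x ∈ {v | R w v}, ∀ y, R2 x y → y ∈ {v | R w v} := fun x hx y hxy =>
        hEq.trans hx (Relation.EqvGen.rel _ _ (Or.inr hxy))
      cases hab with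
      | inl h => exact gw_saturated M R1 h1 _ hT1 a b h
      | inr h => exact gw_saturated M R2 h2 _ hT2 a b h
  | refl a => exact ⟨rfl, fun T _ => ⟨rfl, rfl⟩⟩
  | symm a b _ ih =>
    exact ⟨ih.1.symm, fun T hT => ⟨(ih.2 T hT).1.symm, (ih.2 T hT).2.symm⟩⟩
  | trans a b c _ _ ih1 ih2 =>
    exact ⟨ih1.1.trans ih2.1, fun T hT =>
      ⟨(ih1.2 T hT).1.trans (ih2.2 T hT).1, (ih1.2 T hT).2.trans (ih2.2 T hT).2⟩⟩
end

section
/- Every weighted bisimulation relation is a generalized weighted bisimulation relation; consequently weighted bisimilarity is contained in generalized weighted bisimilarity: ∼_W ⊆ ∼. -/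
open Classical

theorem wBisim_isGWBisim {S AP : Type} (M : WTS S AP) :
    (∀ R : S → S → Prop, IsWBisim M R → IsGWBisim M R) ∧
      ∀ s t : S, wBisimilar M s t → gwBisimilar M s t := by
  have key : ∀ R : S → S → Prop, IsWBisim M R → IsGWBisim M R := by
    intro R hR
    obtain ⟨hEq, hcond⟩ := hR
    refine ⟨hEq, fun s t hst => ⟨(hcond s t hst).1, fun T hT => ?_⟩⟩
    obtain ⟨u0, rfl⟩ := hT
    have hθ : theta M s {v | R u0 v} = theta M t {v | R u0 v} := by
      ext r
      constructor
      · rintro ⟨u, hu, htr⟩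
        obtain ⟨t', htr', hR'⟩ := (hcond s t hst).2.1 r u htr
        exact ⟨t', hEq.trans hu hR', htr'⟩
      · rintro ⟨u, hu, htr⟩
        obtain ⟨s', htr', hR'⟩ := (hcond s t hst).2.2 r u htr
        exact ⟨s', hEq.trans hu (hEq.symm hR'), htr'⟩
    constructor
    · unfold thetaMin; rw [hθ]
    · unfold thetaMax; rw [hθ]
  exact ⟨key, fun s t ⟨R, hR, hst⟩ => ⟨R, key R hR, hst⟩⟩
end

section
/- Soundness of axiom A3: for every WTS M, state s, formulas φ, ψ, and r, q ∈ ℚ≥0, if M,s ⊨ L_r φ and M,s ⊨ L_q ψ then M,s ⊨ L_{min(r,q)}(φ ∨ ψ). -/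
open Classical

/-- Formulae of the logic L. -/
inductive Fml (AP : Type) where
  | atom : AP → Fml AP
  | neg : Fml AP → Fml AP
  | and : Fml AP → Fml AP → Fml AP
  | L : ℚ≥0 → Fml AP → Fml AP
  | M : ℚ≥0 → Fml AP → Fml AP

/-- Disjunction, as a derived operator. -/
def Fml.or {AP : Type} (φ ψ : Fml AP) : Fml AP := .neg (.and (.neg φ) (.neg ψ))

/-- The satisfaction relation M, s ⊨ φ. -/
noncomputable def Sat {S AP : Type} (M : WTS S AP) : Fml AP → S → Prop
  | .atom p, s => p ∈ M.label s
  | .neg φ, s => ¬ Sat M φ s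
  | .and φ ψ, s => Sat M φ s ∧ Sat M ψ s
  | .L r φ, s => ((((r : ℚ) : ℝ)) : EReal) ≤ thetaMin M s {u | Sat M φ u}
  | .M r φ, s => thetaMax M s {u | Sat M φ u} ≤ ((((r : ℚ) : ℝ)) : EReal)


lemma theta_union {S AP : Type} (M : WTS S AP) (s : S) (T U : Set S) :
    theta M s (T ∪ U) = theta M s T ∪ theta M s U := by
  ext x
  simp only [theta, Set.mem_setOf_eq, Set.mem_union]
  constructor
  · rintro ⟨t, ht | ht, htr⟩
    · exact Or.inl ⟨t, ht, htr⟩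
    · exact Or.inr ⟨t, ht, htr⟩
  · rintro (⟨t, ht, htr⟩ | ⟨t, ht, htr⟩)
    · exact ⟨t, Or.inl ht, htr⟩
    · exact ⟨t, Or.inr ht, htr⟩

lemma thetaMin_union_ge {S AP : Type} (M : WTS S AP) (s : S) (T U : Set S) (a : EReal)
    (hT : a ≤ thetaMin M s T) (hU : a ≤ thetaMin M s U) (ha : a ≠ ⊥) :
    a ≤ thetaMin M s (T ∪ U) := by
  have hTne : theta M s T ≠ ∅ := by
    intro h
    simp [thetaMin, h] at hT
    exact ha hT
  have hUne : theta M s U ≠ ∅ := by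
    intro h
    simp [thetaMin, h] at hU
    exact ha hU
  have hne : theta M s (T ∪ U) ≠ ∅ := by
    rw [theta_union]
    intro h
    exact hTne ((Set.union_empty_iff.mp h)).1
  rw [thetaMin, if_neg hne, theta_union, Set.image_union, sInf_union]
  rw [thetaMin, if_neg hTne] at hT
  rw [thetaMin, if_neg hUne] at hU
  exact le_min hT hU

theorem soundness_A3 {S AP : Type} (M : WTS S AP) (s : S) (φ ψ : Fml AP) (r q : ℚ≥0)
    (h₁ : Sat M (.L r φ) s) (h₂ : Sat M (.L q ψ) s) :
    Sat M (.L (min r q) (φ.or ψ)) s := by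
  have hset : {u | Sat M (φ.or ψ) u} = {u | Sat M φ u} ∪ {u | Sat M ψ u} := by
    ext u
    simp [Fml.or, Sat, Set.mem_union]
    tauto
  show ((((min r q : ℚ≥0) : ℚ) : ℝ) : EReal) ≤ thetaMin M s {u | Sat M (φ.or ψ) u}
  rw [hset]
  have hmin : ((((min r q : ℚ≥0) : ℚ) : ℝ) : EReal)
      = min ((((r : ℚ) : ℝ)) : EReal) ((((q : ℚ) : ℝ)) : EReal) := by
    rcases le_total r q with h | h
    · rw [min_eq_left h, min_eq_left (by exact EReal.coe_le_coe_iff.mpr (by exact_mod_cast h))]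
    · rw [min_eq_right h, min_eq_right (by exact EReal.coe_le_coe_iff.mpr (by exact_mod_cast h))]
  rw [hmin]
  apply thetaMin_union_ge
  · exact le_trans (min_le_left _ _) h₁
  · exact le_trans (min_le_right _ _) h₂
  · exact ne_of_gt (lt_of_lt_of_le EReal.bot_lt_zero (le_min (by exact_mod_cast NNRat.cast_nonneg r) (by exact_mod_cast NNRat.cast_nonneg q)))
end

section
/- Soundness of axiom A6: for every WTS M, state s, formula φ, and r, q ∈ ℚ≥0 with q > 0, if M,s ⊨ L_{r+q} φ then M,s ⊭ M_r φ (i.e., M,s ⊨ ¬M_r φ). -/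
open Classical

theorem aux_A6 {S AP : Type} (M : WTS S AP) (s : S) (T : Set S) (r q : ℚ≥0) (hq : 0 < q)
    (h : ((((r+q : ℚ≥0) : ℚ) : ℝ) : EReal) ≤ thetaMin M s T) :
    ¬ thetaMax M s T ≤ ((((r:ℚ≥0) : ℚ) : ℝ) : EReal) := by
  intro hM
  unfold thetaMin at h
  unfold thetaMax at hM
  by_cases he : theta M s T = ∅
  · simp [he] at h
  · simp only [he, if_false] at h hM
    have hne : ((fun r : NNReal => ((r : ℝ) : EReal)) '' theta M s T).Nonempty :=
      (Set.nonempty_iff_ne_empty.mpr he).image _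
    have := le_trans h (le_trans (sInf_le_sSup hne) hM)
    have h2 : ((r + q : ℚ≥0) : ℝ) ≤ ((r : ℚ≥0) : ℝ) := by exact_mod_cast this
    have : ((r + q : ℚ≥0) : ℝ) = (r:ℚ≥0) + (q:ℚ≥0) := by push_cast; ring
    nlinarith [show (0:ℝ) < (q:ℚ≥0) by exact_mod_cast hq]

theorem soundness_A6 {S AP : Type} (M : WTS S AP) (s : S) (φ : Fml AP) (r q : ℚ≥0)
    (hq : 0 < q) (h : Sat M (.L (r + q) φ) s) : ¬ Sat M (.M r φ) s := by
  simp only [Sat] at h ⊢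
  exact aux_A6 M s _ r q hq h
end

section
/- Soundness of rule R1: if φ → ψ is valid (true at every state of every WTS), then (L_r ψ ∧ L₀ φ) → L_r φ is valid, for any r ∈ ℚ≥0. -/
open Classical

section Theta

variable {S AP : Type} (M : WTS S AP) (s : S)

theorem theta_mono {T T' : Set S} (h : T ⊆ T') : theta M s T ⊆ theta M s T' := by
  rintro r ⟨t, ht, htr⟩
  exact ⟨t, h ht, htr⟩

theorem theta_nonempty_of_thetaMin_ne_bot {T : Set S} (h : thetaMin M s T ≠ ⊥) :
    (theta M s T).Nonempty := by
  rw [Set.nonempty_iff_ne_empty]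
  intro hempty
  exact h (if_pos hempty)

theorem thetaMin_anti {T T' : Set S} (h : T ⊆ T') (hne : (theta M s T).Nonempty) :
    thetaMin M s T' ≤ thetaMin M s T := by
  have hne' : (theta M s T').Nonempty := hne.mono (theta_mono M s h)
  rw [thetaMin, if_neg hne'.ne_empty, thetaMin, if_neg hne.ne_empty]
  exact sInf_le_sInf (Set.image_mono (theta_mono M s h))

end Theta

theorem soundness_R1 {AP : Type} (φ ψ : Fml AP) (r : ℚ≥0)
    (hvalid : ∀ (S : Type) (M : WTS S AP) (s : S), Sat M φ s → Sat M ψ s) :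
    ∀ (S : Type) (M : WTS S AP) (s : S),
      Sat M (.L r ψ) s ∧ Sat M (.L 0 φ) s → Sat M (.L r φ) s := by
  rintro S M s ⟨hψ, hφ₀⟩
  simp only [Sat] at hψ hφ₀ ⊢
  have hsub : {u | Sat M φ u} ⊆ {u | Sat M ψ u} := fun u => hvalid S M u
  -- `L₀ φ` rules out `θ⁻ = −∞`, i.e. that no transition from `s` reaches a `φ`-state.
  have hne : (theta M s {u | Sat M φ u}).Nonempty :=
    theta_nonempty_of_thetaMin_ne_bot M s (ne_bot_of_le_ne_bot (by simp) hφ₀)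
  exact hψ.trans (thetaMin_anti M s hsub hne)
end

section
/- Non-compactness of the logic: the infinite set Φ = {L_q φ | q ∈ ℚ≥0, q < r} ∪ {¬L_r φ} (for any fixed formula φ that is satisfiable with a transition to it, e.g. φ = p, and any r ∈ ℚ≥0 with r > 0) has the property that every finite subset of Φ is satisfiable in some WTS at some state, but Φ itself has no model: there is no WTS M and state s with M,s ⊨ χ for all χ ∈ Φ. -/
open Classical

noncomputable def WTSmod (AP : Type) (W : NNReal) : WTS Bool AP :=
  { tr := fun a w b => a = false ∧ b = true ∧ w = W
    label := fun a => {_x | a = true} }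

lemma WTSmod_thetaMin {AP : Type} (p : AP) (W : NNReal) :
    thetaMin (WTSmod AP W) false {u | Sat (WTSmod AP W) (.atom p) u} = ((W:ℝ):EReal) := by
  have hT : {u | Sat (WTSmod AP W) (.atom p) u} = {u | u = true} := by
    ext u; simp [Sat, WTSmod]
  have hth : theta (WTSmod AP W) false {u | u = true} = {W} := by
    ext w
    constructor
    · rintro ⟨t, ht, -, -, rfl⟩; rfl
    · rintro rfl; exact ⟨true, rfl, rfl, rfl, rfl⟩
  rw [hT, thetaMin, hth]
  simp

def qOf {AP : Type} : Fml AP → ℚ≥0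
  | .L q _ => q
  | _ => 0

theorem noncompactness {AP : Type} (p : AP) (r : ℚ≥0) (hr : 0 < r) :
    (∀ Φ₀ : Finset (Fml AP),
        (↑Φ₀ ⊆ ({χ | ∃ q : ℚ≥0, q < r ∧ χ = .L q (.atom p)} ∪ {.neg (.L r (.atom p))} :
          Set (Fml AP))) →
        ∃ (S : Type) (M : WTS S AP) (s : S), ∀ χ ∈ Φ₀, Sat M χ s) ∧
      ¬ ∃ (S : Type) (M : WTS S AP) (s : S),
          ∀ χ ∈ ({χ | ∃ q : ℚ≥0, q < r ∧ χ = .L q (.atom p)} ∪ {.neg (.L r (.atom p))} :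
            Set (Fml AP)), Sat M χ s := by
  constructor
  · intro Φ₀ hsub
    set W0 : ℚ≥0 := Φ₀.sup qOf with hW0
    set W : NNReal := ((W0 : ℚ≥0) : NNReal) with hW
    have hWeq : ((W : ℝ) : EReal) = (((W0:ℚ):ℝ) : EReal) := by norm_cast
    have hW0lt : W0 < r := by
      rw [hW0, Finset.sup_lt_iff hr]
      intro χ hχ
      rcases hsub hχ with ⟨q, hq, rfl⟩ | hc
      · simpa [qOf] using hq
      · simp only [Set.mem_singleton_iff] at hc
        subst hc; simpa [qOf] using hr
    refine ⟨Bool, WTSmod AP W, false, ?_⟩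
    intro χ hχ
    rcases hsub hχ with ⟨q, hq, rfl⟩ | hc
    · show ((((q : ℚ) : ℝ)) : EReal) ≤ _
      rw [WTSmod_thetaMin p W, hWeq]
      have hqW : q ≤ W0 := by
        have := Finset.le_sup (f := qOf) hχ
        simpa [qOf] using this
      exact_mod_cast (by exact_mod_cast hqW : ((q:ℚ):ℝ) ≤ ((W0:ℚ):ℝ))
    · simp only [Set.mem_singleton_iff] at hc
      subst hc
      show ¬ ((((r : ℚ) : ℝ)) : EReal) ≤ _
      rw [WTSmod_thetaMin p W, hWeq]
      rw [not_le]
      exact_mod_cast (by exact_mod_cast hW0lt : ((W0:ℚ):ℝ) < ((r:ℚ):ℝ))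
  · rintro ⟨S, M, s, h⟩
    set e : EReal := thetaMin M s {u | Sat M (.atom p) u} with he
    have hneg : ¬ ((((r : ℚ) : ℝ)) : EReal) ≤ e := h _ (Or.inr rfl)
    have hq : ∀ q : ℚ≥0, q < r → ((((q : ℚ) : ℝ)) : EReal) ≤ e := by
      intro q hq'
      exact h _ (Or.inl ⟨q, hq', rfl⟩)
    apply hneg
    by_contra hlt
    rw [not_le] at hlt
    have h0 : (0 : EReal) ≤ e := by simpa using hq 0 hr
    have hbot : e ≠ ⊥ := fun hb => by simp [hb] at h0
    have htop : e ≠ ⊤ := fun ht => by rw [ht] at hlt; exact (not_top_lt) hlt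
    have heq : ((e.toReal : ℝ) : EReal) = e := EReal.coe_toReal htop hbot
    rw [← heq] at hlt h0
    have hlt' : e.toReal < ((r:ℚ):ℝ) := by exact_mod_cast hlt
    have h0' : (0:ℝ) ≤ e.toReal := by exact_mod_cast h0
    obtain ⟨q', hq1, hq2⟩ := exists_rat_btwn hlt'
    have hq'0 : (0:ℚ) ≤ q' := by exact_mod_cast h0'.trans hq1.le
    set q'' : ℚ≥0 := q'.toNNRat with hq''
    have hcast : ((q'' : ℚ) : ℝ) = (q' : ℝ) := by
      rw [hq'', Rat.coe_toNNRat _ hq'0]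
    have hq''r : q'' < r := by
      have : ((q'' : ℚ)) < ((r : ℚ)) := by
        rw [hq'', Rat.coe_toNNRat _ hq'0]
        exact_mod_cast hq2
      exact_mod_cast this
    have := hq q'' hq''r
    rw [← heq] at this
    have : ((q'' : ℚ) : ℝ) ≤ e.toReal := by exact_mod_cast this
    rw [hcast] at this
    exact absurd hq1 (not_lt.mpr this)
end
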